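/- For density operators ρ and σ on a finite-dimensional Hilbert space, the fidelity satisfies F(ρ,σ) ≥ 2^{-D_max(ρ‖σ)/2}, where D_max(ρ‖σ) = inf{λ ∈ ℝ : ρ ≤ 2^λ σ}. -/

import Mathlib

open Matrix
open scoped ComplexOrder Classical

/-- Square root of a positive semidefinite matrix (junk value `0` otherwise). -/
noncomputable def matSqrt {n : Type*} [Fintype n] [DecidableEq n]
    (A : Matrix n n ℂ) : Matrix n n ℂ :=
  if h : A.PosSemidef then
    (h.1.eigenvectorUnitary : Matrix n n ℂ) * diagonal ((↑) ∘ (√·) ∘ h.1.eigenvalues) *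
      (star h.1.eigenvectorUnitary : Matrix n n ℂ)
  else 0

/-- Trace norm `‖M‖₁ = Tr √(Mᴴ M)`. -/
noncomputable def traceNorm {n : Type*} [Fintype n] [DecidableEq n]
    (M : Matrix n n ℂ) : ℝ :=
  (matSqrt (Mᴴ * M)).trace.re

/-- Fidelity `‖√ρ √σ‖₁`. -/
noncomputable def fidelity {n : Type*} [Fintype n] [DecidableEq n]
    (ρ σ : Matrix n n ℂ) : ℝ :=
  traceNorm (matSqrt ρ * matSqrt σ)

/-- Max-relative entropy `D_max(ρ‖σ) = inf {λ : ρ ≤ 2^λ σ}` (Löwner order);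
when the set is empty `D_max = +∞` and the statement below is vacuous, so we
record the finiteness of `D_max` as the nonemptiness of that set. -/
noncomputable def dmax {n : Type*} [Fintype n] (ρ σ : Matrix n n ℂ) : ℝ :=
  sInf {l : ℝ | ((2 : ℝ) ^ l • σ - ρ).PosSemidef}

/-! If `ρ ≤ 2^l σ`, conjugating by `√ρ` gives `(2^{-l/2} ρ)² ≤ √ρ σ √ρ`, and operator monotonicity
of the square root turns this into `2^{-l/2} ρ ≤ √(√ρ σ √ρ)`. For `M = √ρ √σ` we have
`M Mᴴ = √ρ σ √ρ`, and `M Mᴴ`, `Mᴴ M` have the same eigenvalues, so taking traces gives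
`2^{-l/2} ≤ Tr √(Mᴴ M) = F(ρ, σ)`. Letting `l` decrease to `D_max(ρ‖σ)` finishes the proof. -/

-- The L2 operator norm makes `Matrix n n ℂ` a C⋆-algebra, where `CFC.sqrt` is operator monotone.
open scoped MatrixOrder Matrix.Norms.L2Operator

lemma Antitone.apply_sInf_le_of_forall_le {S : Set ℝ} {g : ℝ → ℝ} (hg : Antitone g)
    (hg' : Continuous g) (hS : S.Nonempty) {b : ℝ} (h : ∀ l ∈ S, g l ≤ b) : g (sInf S) ≤ b := by
  refine ContinuousWithinAt.closure_le (s := Set.Ioi (sInf S)) (by simp)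
    hg'.continuousWithinAt continuousWithinAt_const fun x hx => ?_
  obtain ⟨l, hlS, hlx⟩ := Real.lt_sInf_add_pos hS (sub_pos.2 hx)
  exact (hg (by linarith)).trans (h l hlS)

section
variable {n : Type*} [Fintype n] [DecidableEq n]

lemma Matrix.IsHermitian.trace_cfc_eq_of_charpoly_eq {𝕜 : Type*} [RCLike 𝕜] {A B : Matrix n n 𝕜}
    (hA : A.IsHermitian) (hB : B.IsHermitian) (h : A.charpoly = B.charpoly) (f : ℝ → ℝ) :
    (cfc f A).trace = (cfc f B).trace := by
  rw [hA.cfc_eq, hB.cfc_eq, IsHermitian.cfc, IsHermitian.cfc, Unitary.conjStarAlgAut_apply,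
    Unitary.conjStarAlgAut_apply, trace_mul_cycle, trace_mul_cycle (B := diagonal _)]
  simp [(hA.eigenvalues_eq_eigenvalues_iff hB).2 h]

lemma Matrix.trace_cfc_conjTranspose_mul_self {𝕜 : Type*} [RCLike 𝕜] (M : Matrix n n 𝕜)
    (f : ℝ → ℝ) : (cfc f (Mᴴ * M)).trace = (cfc f (M * Mᴴ)).trace :=
  (isHermitian_conjTranspose_mul_self M).trace_cfc_eq_of_charpoly_eq
    (isHermitian_mul_conjTranspose_self M) (charpoly_mul_comm _ _) f

lemma matSqrt_eq_sqrt (A : Matrix n n ℂ) : matSqrt A = CFC.sqrt A := by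
  rw [matSqrt, CFC.sqrt_eq_cfc]
  split_ifs with hA
  · rw [cfc_nnreal_eq_real _ A hA.nonneg, hA.1.cfc_eq, IsHermitian.cfc,
      Unitary.conjStarAlgAut_apply]
    -- `Real.sqrt` is irreducible; by definition it is `NNReal.sqrt ∘ Real.toNNReal`.
    unfold Real.sqrt
    rfl
  · exact (cfc_apply_of_not_predicate A fun h => hA h.posSemidef).symm

lemma fidelity_eq_trace_sqrt (ρ : Matrix n n ℂ) {σ : Matrix n n ℂ} (hσ : 0 ≤ σ) :
    fidelity ρ σ = (CFC.sqrt (CFC.sqrt ρ * σ * CFC.sqrt ρ)).trace.re := by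
  set M := CFC.sqrt ρ * CFC.sqrt σ
  have hMM : M * Mᴴ = CFC.sqrt ρ * σ * CFC.sqrt ρ := by
    rw [conjTranspose_mul, (CFC.sqrt_nonneg σ).posSemidef.1.eq,
      (CFC.sqrt_nonneg ρ).posSemidef.1.eq, mul_assoc, ← mul_assoc (CFC.sqrt σ),
      CFC.sqrt_mul_sqrt_self σ hσ, ← mul_assoc]
  rw [fidelity, traceNorm, matSqrt_eq_sqrt, matSqrt_eq_sqrt, matSqrt_eq_sqrt, ← hMM,
    CFC.sqrt_eq_cfc (a := Mᴴ * M), CFC.sqrt_eq_cfc (a := M * Mᴴ),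
    cfc_nnreal_eq_real _ _ (posSemidef_conjTranspose_mul_self M).nonneg,
    cfc_nnreal_eq_real _ _ (posSemidef_self_mul_conjTranspose M).nonneg,
    trace_cfc_conjTranspose_mul_self]

lemma mul_trace_re_le_fidelity {ρ σ : Matrix n n ℂ} (hρ : 0 ≤ ρ) (hσ : 0 ≤ σ) {c : ℝ}
    (hc : 0 ≤ c) (h : c ^ 2 • ρ ≤ σ) : c * ρ.trace.re ≤ fidelity ρ σ := by
  set a := CFC.sqrt ρ
  have hρa : ρ = a * a := (CFC.sqrt_mul_sqrt_self ρ hρ).symm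
  have hsq : (c • ρ) ^ 2 ≤ a * σ * a := calc
    (c • ρ) ^ 2 = a * (c ^ 2 • ρ) * a := by
      rw [hρa]
      simp only [sq, smul_smul, Matrix.mul_smul, Matrix.smul_mul, mul_assoc]
    _ ≤ a * σ * a := (CFC.sqrt_nonneg ρ).isSelfAdjoint.conjugate_le_conjugate h
  have hle : c • ρ ≤ CFC.sqrt (a * σ * a) :=
    CFC.sqrt_sq (c • ρ) (smul_nonneg hc hρ) ▸ CFC.sqrt_le_sqrt _ _ hsq
  simpa [fidelity_eq_trace_sqrt ρ hσ] using
    Complex.re_le_re ((tracePositiveLinearMap n ℝ ℂ).monotone hle)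

lemma two_rpow_neg_half_le_fidelity {ρ σ : Matrix n n ℂ} (hρ : ρ.PosSemidef)
    (hρ1 : ρ.trace = 1) (hσ : σ.PosSemidef) {l : ℝ} (hl : ((2 : ℝ) ^ l • σ - ρ).PosSemidef) :
    (2 : ℝ) ^ (-(l / 2)) ≤ fidelity ρ σ := by
  have hc : ((2 : ℝ) ^ (-(l / 2))) ^ 2 = (2 ^ l)⁻¹ := by
    rw [← Real.rpow_natCast, ← Real.rpow_mul zero_le_two, ← Real.rpow_neg zero_le_two]
    norm_num
  have h : ((2 : ℝ) ^ (-(l / 2))) ^ 2 • ρ ≤ σ := by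
    have hl' := hl.smul (inv_nonneg.2 (Real.rpow_nonneg zero_le_two l))
    rwa [smul_sub, smul_smul, inv_mul_cancel₀ (by positivity), one_smul, ← le_iff, ← hc] at hl'
  simpa [hρ1] using mul_trace_re_le_fidelity hρ.nonneg hσ.nonneg (by positivity) h

end

theorem fidelity_ge_two_rpow_neg_dmax_general {n : Type*} [Fintype n] [DecidableEq n]
    (ρ σ : Matrix n n ℂ) (hρ : ρ.PosSemidef) (hρ1 : ρ.trace = 1)
    (hσ : σ.PosSemidef)
    (hfin : {l : ℝ | ((2 : ℝ) ^ l • σ - ρ).PosSemidef}.Nonempty) :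
    (2 : ℝ) ^ (-(dmax ρ σ / 2)) ≤ fidelity ρ σ := by
  have hanti : Antitone fun l : ℝ => (2 : ℝ) ^ (-(l / 2)) := fun x y hxy =>
    Real.rpow_le_rpow_of_exponent_le one_le_two (by linarith)
  exact hanti.apply_sInf_le_of_forall_le (by fun_prop (disch := norm_num)) hfin
    fun l hl => two_rpow_neg_half_le_fidelity hρ hρ1 hσ hl

theorem fidelity_ge_two_rpow_neg_dmax {n : Type*} [Fintype n] [DecidableEq n]
    (ρ σ : Matrix n n ℂ) (hρ : ρ.PosSemidef) (hρ1 : ρ.trace = 1)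
    (hσ : σ.PosSemidef) (hσ1 : σ.trace = 1)
    (hfin : {l : ℝ | ((2 : ℝ) ^ l • σ - ρ).PosSemidef}.Nonempty) :
    (2 : ℝ) ^ (-(dmax ρ σ / 2)) ≤ fidelity ρ σ :=
  fidelity_ge_two_rpow_neg_dmax_general ρ σ hρ hρ1 hσ hfin
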